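/- Let T be a tableau with exactly one entry equal to ∞ and let x be a finite number. Then (sh* T) ↗ (sh* (T ← x)) is an edge of the augmented Young graph, where T ← x denotes the Schensted row insertion of x into T. -/
import Mathlib


open MeasureTheory ProbabilityTheory Filter Topology

noncomputable section

namespace PoissonBump

/-- The row with index `y` of a tableau. -/
def rowOf {α : Type*} (tab : List (List α)) (y : ℕ) : List α := tab.getD y ([] : List α)

/-- Schensted insertion of `a` into a single row: returns the new row and the bumped entry
(`none` if `a` was appended at the end of the row). -/
def rowIns {α : Type*} [LinearOrder α] (r : List α) (a : α) : List α × Option α :=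
  match r.findIdx? (fun b => decide (a < b)) with
  | none => (r ++ [a], none)
  | some i => (r.set i a, r[i]?)

/-- Schensted row insertion of `a` into a tableau, given as the list of its rows
(row `0` is the bottom row). -/
def insertTab {α : Type*} [LinearOrder α] : List (List α) → α → List (List α)
  | [], a => [[a]]
  | r :: rest, a =>
    match rowIns r a with
    | (r', none) => r' :: rest
    | (r', some b) => r' :: insertTab rest b

/-- The RSK insertion tableau `P(w)` of a finite sequence `w`. -/
def insTab {α : Type*} [LinearOrder α] (w : List α) : List (List α) :=
  w.foldl insertTab ([] : List (List α))

/-- The first `n` entries of an infinite sequence. -/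
def pref {α : Type*} (w : ℕ → α) (n : ℕ) : List α := (List.range n).map w

/-- The set of boxes `(x, y)` (column, row) of a tableau. -/
def cellsOf {α : Type*} (tab : List (List α)) : Finset (ℕ × ℕ) :=
  (Finset.range tab.length).biUnion fun y =>
    (Finset.range ((rowOf tab y).length)).image fun x => (x, y)

/-- The entry in column `x`, row `y` of the recording tableau `Q(w)` of an infinite
sequence `w`, i.e. the number of the Schensted insertion step at which the box `(x, y)`
stopped being empty (`⊤` if it stays empty forever). -/
def recTab (w : ℕ → ℝ) (x y : ℕ) : ℕ∞ :=
  sInf {n : ℕ∞ | ∃ k : ℕ, n = (k : ℕ∞) ∧ (x, y) ∈ cellsOf (insTab (pref w k))}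

/-- Auxiliary description of the bumping route of the insertion `T ← m + 1/2` into an
infinite tableau `T` (with entries in `ℕ∞`, the value `⊤` marking an empty box):
`(routeAux T m y).1` is the column of the box of the bumping route in row `y`, and
`(routeAux T m y).2` is the entry of `T` in that box (the value bumped to row `y+1`;
it is `⊤` if that box is empty, in which case the route terminates there). -/
def routeAux (T : ℕ → ℕ → ℕ∞) (m : ℕ) : ℕ → ℕ × ℕ∞
  | 0 =>
    (sInf {x : ℕ | (m : ℕ∞) < T x 0}, T (sInf {x : ℕ | (m : ℕ∞) < T x 0}) 0)
  | y + 1 =>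
    (sInf {x : ℕ | (routeAux T m y).2 < T x (y + 1)},
      T (sInf {x : ℕ | (routeAux T m y).2 < T x (y + 1)}) (y + 1))

/-- The bumping route `T ⤳ m + 1/2` reaches row `y`. -/
def routeDef (T : ℕ → ℕ → ℕ∞) (m y : ℕ) : Prop :=
  ∀ y' < y, (routeAux T m y').2 ≠ ⊤

/-- `Y_x^{[m]}`: the index of the first row in which the bumping route `T ⤳ m + 1/2`
reaches the column with index `x` (or a column to its left); `⊤` if no such row exists. -/
def Yrow (T : ℕ → ℕ → ℕ∞) (m x : ℕ) : ℕ∞ :=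
  sInf {n : ℕ∞ | ∃ y : ℕ, n = (y : ℕ∞) ∧ routeDef T m y ∧ (routeAux T m y).1 ≤ x}

/-- The row of the first box of the bumping route `T ⤳ m + 1/2` whose entry in `T`
exceeds `t` (an empty box, with entry `⊤`, counts). -/
def lazyRow (T : ℕ → ℕ → ℕ∞) (m t : ℕ) : ℕ :=
  sInf {y : ℕ | (t : ℕ∞) < (routeAux T m y).2}

/-- `Box^{lazy}_{T,m}(t)`, the lazy parametrization of the bumping route: the first box
`(x, y)` of the bumping route `T ⤳ m + 1/2` whose entry in `T` is larger than `t`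
(or the final box of the route if all entries of `T` on the route are `≤ t`). -/
def lazyBox (T : ℕ → ℕ → ℕ∞) (m t : ℕ) : ℕ × ℕ :=
  ((routeAux T m (lazyRow T m t)).1, lazyRow T m t)

/-- `T_x^{[m]}`: the time at which the bumping route `T ⤳ m + 1/2` in the lazy
parametrization reaches the column with index `x` (or a column to its left). -/
def Tlazy (T : ℕ → ℕ → ℕ∞) (m x : ℕ) : ℕ∞ :=
  sInf {n : ℕ∞ | ∃ t : ℕ, n = (t : ℕ∞) ∧ m ≤ t ∧ (lazyBox T m t).1 ≤ x}

/-- The sequence `ξ₁, …, ξ_m, ∞, ξ_{m+1}, …, ξ_t` (as a list over `WithTop ℝ`). -/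
def wtSeq (w : ℕ → ℝ) (m t : ℕ) : List (WithTop ℝ) :=
  ((List.range m).map fun i => (w i : WithTop ℝ)) ++
    (⊤ : WithTop ℝ) :: ((List.range (t - m)).map fun j => (w (m + j) : WithTop ℝ))

/-- The position `(x, y)` (column, row) of the box containing `∞ = ⊤` in a tableau. -/
def posTop (tab : List (List (WithTop ℝ))) : ℕ × ℕ :=
  ((sInf {x : ℕ | (rowOf tab (sInf {y : ℕ | (⊤ : WithTop ℝ) ∈ rowOf tab y})).getD x 0 = ⊤}),
    sInf {y : ℕ | (⊤ : WithTop ℝ) ∈ rowOf tab y})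

/-- The augmented shape `sh* T` of a tableau containing the entry `∞ = ⊤`: the pair
consisting of the shape of `T` with the `∞`-box removed, and the position of the `∞`-box. -/
def shStar (tab : List (List (WithTop ℝ))) : Finset (ℕ × ℕ) × ℕ × ℕ :=
  ((cellsOf tab).filter (fun c => (rowOf tab c.2).getD c.1 0 ≠ ⊤), posTop tab)

/-- The augmented Plancherel growth process: `augP w m t = sh* P(w₁,…,w_m,∞,w_{m+1},…,w_t)`. -/
def augP (w : ℕ → ℝ) (m t : ℕ) : Finset (ℕ × ℕ) × ℕ × ℕ :=
  shStar (insTab (wtSeq w m t))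

/-- The Plancherel growth process: the shape of the RSK insertion tableau of `w₁, …, w_t`. -/
def shP (w : ℕ → ℝ) (t : ℕ) : Finset (ℕ × ℕ) := cellsOf (insTab (pref w t))

/-- The common shape of the RSK insertion and recording tableaux of a permutation. -/
def shapeOfPerm {n : ℕ} (π : Equiv.Perm (Fin n)) : Finset (ℕ × ℕ) :=
  cellsOf (insTab (List.ofFn fun i => ((π i : ℕ) : ℝ)))

open scoped Classical in
/-- The Plancherel measure of the Young diagram `s`: the probability that the RSK shape of
a uniformly random permutation of `{1, …, n}` equals `s`. -/
def plancherelProb (n : ℕ) (s : Finset (ℕ × ℕ)) : ℝ :=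
  ((Finset.univ.filter fun π : Equiv.Perm (Fin n) => shapeOfPerm π = s).card : ℝ) / n.factorial

/-- The exponential distribution `Exp(1)` on `ℝ`. -/
def expMeasure : Measure ℝ :=
  volume.withDensity fun u => ENNReal.ofReal (if 0 ≤ u then Real.exp (-u) else 0)

/-- The Erlang distribution `Erlang(l+1, 1)`, with density `u^l e^{-u} / l!` on `ℝ₊`. -/
def erlangMeasure (l : ℕ) : Measure ℝ :=
  volume.withDensity fun u =>
    ENNReal.ofReal (if 0 ≤ u then u ^ l * Real.exp (-u) / l.factorial else 0)

/-- The distribution on `[1, ∞)` with tail `P(R > u) = u^{-(i+1)}` for `u ≥ 1`,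
given by its density `(i+1) u^{-(i+2)}`. -/
def ratioMeasure (i : ℕ) : Measure ℝ :=
  volume.withDensity fun u =>
    ENNReal.ofReal (if 1 ≤ u then ((i : ℝ) + 1) * u ^ (-((i : ℤ) + 2)) else 0)

/-- The Poisson probability mass function with parameter `r`. -/
def poisPMF (r : ℝ) (n : ℕ) : ℝ := Real.exp (-r) * r ^ n / n.factorial

/-- The binomial probability mass function `Binom(k, p)`. -/
def binomPMF (k : ℕ) (p : ℝ) (n : ℕ) : ℝ :=
  if n ≤ k then (k.choose n : ℝ) * p ^ n * (1 - p) ^ (k - n) else 0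

/-- The counting process of the point process of partial sums of `ψ₀, ψ₁, …`:
`countN ψ z ω = #{k : ψ₀(ω) + ⋯ + ψ_k(ω) ≤ z}`. -/
def countN {Ω' : Type*} (ψ : ℕ → Ω' → ℝ) (z : ℝ) (ω : Ω') : ℕ :=
  sInf {n : ℕ | z < ∑ j ∈ Finset.range (n + 1), ψ j ω}

/-- `(s, c)` is an augmented Young diagram: `s` is a Young diagram (a finite lower set)
and `c` is one of its outer corners. -/
def IsAug (s : Finset (ℕ × ℕ)) (c : ℕ × ℕ) : Prop :=
  IsLowerSet (s : Set (ℕ × ℕ)) ∧ c ∉ s ∧ IsLowerSet (insert c (s : Set (ℕ × ℕ)))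

open scoped Classical in
/-- The edge relation of the augmented Young graph, on pairs
(cells of the regular part, special box): `b` is obtained from `a` by adding one box to the
regular part, and the special box of `b` is the outer corner in the row directly above the
special box of `a` if the new box is the special box of `a`, and the special box of `a`
otherwise. -/
def AugEdgeData (a b : Finset (ℕ × ℕ) × ℕ × ℕ) : Prop :=
  IsAug a.1 a.2 ∧ IsAug b.1 b.2 ∧ a.1 ⊆ b.1 ∧ b.1.card = a.1.card + 1 ∧
    (if b.1 = insert a.2 a.1 then b.2.2 = a.2.2 + 1 else b.2 = a.2)

/-- A tableau (a list of rows, bottom row first): nonempty rows of weakly decreasing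
lengths, entries strictly increasing along rows and up the columns. -/
def IsTab (tab : List (List (WithTop ℝ))) : Prop :=
  (∀ r ∈ tab, r ≠ []) ∧
  (∀ r ∈ tab, List.Chain' (· < ·) r) ∧
  List.Chain' (fun r s : List (WithTop ℝ) => s.length ≤ r.length) tab ∧
  (∀ (y x : ℕ) (a b : WithTop ℝ), (rowOf tab y)[x]? = some a →
     (rowOf tab (y + 1))[x]? = some b → a < b)

/-- Stirling numbers of the second kind. -/
def stirling2 : ℕ → ℕ → ℕ
  | 0, 0 => 1
  | 0, _ + 1 => 0
  | _ + 1, 0 => 0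
  | n + 1, j + 1 => (j + 1) * stirling2 n (j + 1) + stirling2 n j

/-- The signed combination of Poisson distributions `ν_{k,p,h}` (as a function on `ℕ`). -/
def nuPMF (k : ℕ) (p h : ℝ) (n : ℕ) : ℝ :=
  ((Real.exp h - 1) ^ k)⁻¹ *
    ∑ j ∈ Finset.range (k + 1),
      (-1 : ℝ) ^ (k - j) * (k.choose j : ℝ) * Real.exp (j * h) * poisPMF (p * j * h) n

/-- The number of boxes in the row with index `i` of the diagram `s`. -/
def rowLen (s : Finset (ℕ × ℕ)) (i : ℕ) : ℕ := (s.filter fun c => c.2 = i).card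

/-- The edge relation of the augmented Young graph on `ℕ₀ × 𝕐`, where an augmented Young
diagram `(λ, □)` is identified with `(x_□, λ)` for `x_□` the column of the special box. -/
def edgeNY (a b : ℕ × Finset (ℕ × ℕ)) : Prop :=
  a.2 ⊆ b.2 ∧ b.2.card = a.2.card + 1 ∧
    ((∃ r, (a.1, r) ∈ b.2 \ a.2) →
      b.1 = sSup {v : ℕ | (∃ i, rowLen b.2 i = v) ∧ v ≤ a.1}) ∧
    ((¬ ∃ r, (a.1, r) ∈ b.2 \ a.2) → b.1 = a.1)

/-! ### Auxiliary lemmas for Statement 7 -/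

section Aux

variable {α : Type*}

theorem rowOf_nil (y : ℕ) : rowOf ([] : List (List α)) y = [] := by
  simp [rowOf]

theorem rowOf_cons_zero (r : List α) (rest : List (List α)) :
    rowOf (r :: rest) 0 = r := rfl

theorem rowOf_cons_succ (r : List α) (rest : List (List α)) (y : ℕ) :
    rowOf (r :: rest) (y + 1) = rowOf rest y := rfl

theorem rowOf_eq_nil_of_le {tab : List (List α)} {y : ℕ} (h : tab.length ≤ y) :
    rowOf tab y = [] := List.getD_eq_default _ _ h

theorem rowOf_eq_getElem {tab : List (List α)} {y : ℕ} (h : y < tab.length) :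
    rowOf tab y = tab[y] := List.getD_eq_getElem _ _ h

theorem mem_cellsOf {tab : List (List α)} {x y : ℕ} :
    (x, y) ∈ cellsOf tab ↔ y < tab.length ∧ x < (rowOf tab y).length := by
  simp only [cellsOf, Finset.mem_biUnion, Finset.mem_range, Finset.mem_image]
  constructor
  · rintro ⟨y', hy', x', hx', h⟩
    obtain ⟨rfl, rfl⟩ : x' = x ∧ y' = y := by
      simpa [Prod.ext_iff] using h
    exact ⟨hy', hx'⟩
  · rintro ⟨hy, hx⟩
    exact ⟨y, hy, x, hx, rfl⟩

/-- The core structural description of Schensted row insertion. -/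
theorem insert_spec [LinearOrder α] (tab : List (List α)) (a : α) :
    ∃ (k : ℕ) (pcol : ℕ → ℕ) (val : ℕ → α),
      k ≤ tab.length ∧
      (insertTab tab a).length = max tab.length (k + 1) ∧
      val 0 = a ∧
      (∀ y < k, pcol y < (rowOf tab y).length) ∧
      (∀ y < k, rowOf (insertTab tab a) y = (rowOf tab y).set (pcol y) (val y)) ∧
      (∀ y < k, (rowOf tab y)[pcol y]? = some (val (y + 1)) ∧ val y < val (y + 1)) ∧
      (∀ y < k, ∀ j < pcol y, ∀ b, (rowOf tab y)[j]? = some b → ¬ val y < b) ∧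
      rowOf (insertTab tab a) k = rowOf tab k ++ [val k] ∧
      (∀ b ∈ rowOf tab k, ¬ val k < b) ∧
      (∀ y, k < y → rowOf (insertTab tab a) y = rowOf tab y) := by
  induction tab generalizing a with
  | nil =>
    refine ⟨0, fun _ => 0, fun _ => a, le_refl _, by simp [insertTab], rfl,
      by omega, by omega, by omega, by omega, by simp [insertTab, rowOf_nil, rowOf_cons_zero],
      by simp [rowOf_nil], fun y hy => ?_⟩
    rw [rowOf_eq_nil_of_le (by simp [insertTab]; omega), rowOf_nil]
  | cons r rest ih =>
    rcases h : (r.findIdx? fun b => decide (a < b)) with _ | i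
    · have htab' : insertTab (r :: rest) a = (r ++ [a]) :: rest := by
        simp [insertTab, rowIns, h]
      have hnone := List.findIdx?_eq_none_iff.mp h
      refine ⟨0, fun _ => 0, fun _ => a, by omega, by simp [htab'], rfl,
        by omega, by omega, by omega, by omega, by simp [htab', rowOf_cons_zero],
        ?_, fun y hy => ?_⟩
      · intro b hb
        simpa using hnone b hb
      · obtain ⟨y', rfl⟩ : ∃ y', y = y' + 1 := ⟨y - 1, by omega⟩
        rw [htab', rowOf_cons_succ, rowOf_cons_succ]
    · obtain ⟨hi, hai, hmin⟩ := List.findIdx?_eq_some_iff_getElem.mp h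
      have hai : a < r[i] := by simpa using hai
      have htab' : insertTab (r :: rest) a = (r.set i a) :: insertTab rest r[i] := by
        simp [insertTab, rowIns, h, List.getElem?_eq_getElem hi]
      obtain ⟨k', pcol', val', hk'le, hlen', hval0', hpcol', hrow', hbump', hmin', happ',
        hterm', hrest'⟩ := ih r[i]
      refine ⟨k' + 1, fun y => match y with | 0 => i | y + 1 => pcol' y,
        fun y => match y with | 0 => a | y + 1 => val' y, by simp; omega, ?_, rfl,
        ?_, ?_, ?_, ?_, ?_, ?_, ?_⟩
      · simp only [htab', List.length_cons, hlen']
        omega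
      · rintro (_ | y) hy
        · simpa [rowOf_cons_zero] using hi
        · simpa [rowOf_cons_succ] using hpcol' y (by omega)
      · rintro (_ | y) hy
        · simp [htab', rowOf_cons_zero]
        · simpa [htab', rowOf_cons_succ] using hrow' y (by omega)
      · rintro (_ | y) hy
        · refine ⟨?_, ?_⟩
          · simpa [rowOf_cons_zero, List.getElem?_eq_getElem hi] using hval0'.symm
          · simpa [hval0'] using hai
        · simpa [rowOf_cons_succ] using hbump' y (by omega)
      · rintro (_ | y) hy j hj b hb
        · have hji : j < i := hj
          have hjr : j < r.length := by omega
          rw [rowOf_cons_zero, List.getElem?_eq_getElem hjr] at hb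
          obtain rfl := Option.some_inj.mp hb
          simpa using hmin j hji
        · exact hmin' y (by omega) j hj b hb
      · simpa [htab', rowOf_cons_succ] using happ'
      · simpa [rowOf_cons_succ] using hterm'
      · rintro (_ | y) hy
        · omega
        · simpa [htab', rowOf_cons_succ] using hrest' y (by omega)

theorem rowLen_anti {tab : List (List α)}
    (h : List.Chain' (fun r s : List α => s.length ≤ r.length) tab) {y y' : ℕ}
    (hyy : y ≤ y') : (rowOf tab y').length ≤ (rowOf tab y).length := by
  rcases le_or_gt tab.length y' with h' | h'
  · simp [rowOf_eq_nil_of_le h']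
  · have hy : y < tab.length := lt_of_le_of_lt hyy h'
    rw [rowOf_eq_getElem h', rowOf_eq_getElem hy]
    rcases eq_or_lt_of_le hyy with rfl | hlt
    · exact le_refl _
    · have : IsTrans (List α) (fun r s : List α => s.length ≤ r.length) :=
        ⟨fun a b c h1 h2 => le_trans h2 h1⟩
      exact List.pairwise_iff_getElem.mp (List.isChain_iff_pairwise.mp h) y y' hy h' hlt

theorem row_strict [LinearOrder α] {tab : List (List α)}
    (h2 : ∀ r ∈ tab, List.Chain' (· < ·) r) {y x x' : ℕ}
    (hy : y < tab.length) (hxx : x < x') (hx' : x' < (rowOf tab y).length)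
    {a b : α} (ha : (rowOf tab y)[x]? = some a) (hb : (rowOf tab y)[x']? = some b) :
    a < b := by
  have hrow : rowOf tab y ∈ tab := by rw [rowOf_eq_getElem hy]; exact List.getElem_mem _
  have hchain := List.isChain_iff_pairwise.mp (h2 _ hrow)
  have hx : x < (rowOf tab y).length := lt_trans hxx hx'
  rw [List.getElem?_eq_getElem hx] at ha
  rw [List.getElem?_eq_getElem hx'] at hb
  obtain rfl := Option.some_inj.mp ha
  obtain rfl := Option.some_inj.mp hb
  exact List.pairwise_iff_getElem.mp hchain x x' hx hx' hxx

theorem cells_lower {tab : List (List α)}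
    (h : List.Chain' (fun r s : List α => s.length ≤ r.length) tab) :
    IsLowerSet (cellsOf tab : Set (ℕ × ℕ)) := by
  rintro ⟨x, y⟩ ⟨x', y'⟩ ⟨hx, hy⟩ hmem
  simp only [Finset.mem_coe, mem_cellsOf] at hmem ⊢
  refine ⟨lt_of_le_of_lt hy hmem.1, lt_of_le_of_lt hx (lt_of_lt_of_le hmem.2 ?_)⟩
  exact rowLen_anti h hy

theorem posTop_eq {tab : List (List (WithTop ℝ))} {p : ℕ × ℕ}
    (hp : (rowOf tab p.2)[p.1]? = some ⊤)
    (huniq : ∀ q : ℕ × ℕ, (rowOf tab q.2)[q.1]? = some ⊤ → q = p) :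
    posTop tab = p := by
  have hrowset : {y : ℕ | (⊤ : WithTop ℝ) ∈ rowOf tab y} = {p.2} := by
    ext y
    simp only [Set.mem_setOf_eq, Set.mem_singleton_iff]
    constructor
    · intro hy
      obtain ⟨x, hx⟩ := List.mem_iff_getElem?.mp hy
      exact congrArg Prod.snd (huniq (x, y) hx)
    · rintro rfl
      exact List.mem_iff_getElem?.mpr ⟨p.1, hp⟩
  have hcolset : {x : ℕ | (rowOf tab p.2).getD x 0 = ⊤} = {p.1} := by
    ext x
    simp only [Set.mem_setOf_eq, Set.mem_singleton_iff]
    rw [List.getD_eq_getElem?_getD]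
    constructor
    · intro hx
      rcases lt_or_ge x (rowOf tab p.2).length with h | h
      · rw [List.getElem?_eq_getElem h] at hx
        simp only [Option.getD_some] at hx
        exact congrArg Prod.fst (huniq (x, p.2) (by rw [List.getElem?_eq_getElem h, hx]))
      · rw [List.getElem?_eq_none h] at hx
        simp only [Option.getD_none] at hx
        exact absurd hx (WithTop.coe_ne_top (a := (0 : ℝ)))
    · rintro rfl
      rw [hp]
      rfl
  rw [posTop, hrowset, csInf_singleton, hcolset, csInf_singleton, Prod.mk.eta]

theorem mem_cellsOf' {tab : List (List α)} {q : ℕ × ℕ} :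
    q ∈ cellsOf tab ↔ q.2 < tab.length ∧ q.1 < (rowOf tab q.2).length := by
  obtain ⟨x, y⟩ := q
  exact mem_cellsOf

theorem shStar_eq {tab : List (List (WithTop ℝ))} {p : ℕ × ℕ}
    (hp : (rowOf tab p.2)[p.1]? = some ⊤)
    (huniq : ∀ q : ℕ × ℕ, (rowOf tab q.2)[q.1]? = some ⊤ → q = p) :
    shStar tab = ((cellsOf tab).erase p, p) := by
  unfold shStar
  rw [posTop_eq hp huniq]
  congr 1
  ext q
  simp only [Finset.mem_filter, Finset.mem_erase]
  constructor
  · rintro ⟨hq, hne⟩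
    refine ⟨fun hqp => hne ?_, hq⟩
    subst hqp
    rw [List.getD_eq_getElem?_getD, hp]
    rfl
  · rintro ⟨hqp, hq⟩
    refine ⟨hq, fun hcon => hqp ?_⟩
    rw [List.getD_eq_getElem?_getD] at hcon
    have hlt : q.1 < (rowOf tab q.2).length := (mem_cellsOf'.mp hq).2
    rw [List.getElem?_eq_getElem hlt] at hcon
    simp only [Option.getD_some] at hcon
    exact huniq q (by rw [List.getElem?_eq_getElem hlt, hcon])

end Aux

/-- If `T` is a tableau with exactly one entry equal to `∞` and `x` is a
finite number then `(sh* T) ↗ (sh* (T ← x))` is an edge of the augmented Young graph. -/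
theorem augmented_shape_insertion_edge
    (tab : List (List (WithTop ℝ))) (htab : IsTab tab)
    (hinf : ∃! p : ℕ × ℕ, (rowOf tab p.2)[p.1]? = some ⊤) (x : ℝ) :
    AugEdgeData (shStar tab) (shStar (insertTab tab (x : WithTop ℝ))) := by
  obtain ⟨h1ne, h2row, h3len, h4col⟩ := htab
  obtain ⟨p, hp, hpuniq'⟩ := hinf
  have hpuniq : ∀ q : ℕ × ℕ, (rowOf tab q.2)[q.1]? = some ⊤ → q = p := fun q hq => hpuniq' q hq
  obtain ⟨k, pcol, val, hk, hlen, hval0, hpcol, hrow, hbump, hmin, happ, hterm, hrest⟩ :=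
    insert_spec tab (x : WithTop ℝ)
  set tab' := insertTab tab (x : WithTop ℝ) with htab'def
  -- basic facts about the position `p` of `⊤`
  have hpk : p.2 < tab.length := by
    by_contra h
    rw [rowOf_eq_nil_of_le (le_of_not_gt h)] at hp
    simp at hp
  have hpi : p.1 < (rowOf tab p.2).length := by
    by_contra h
    rw [List.getElem?_eq_none (le_of_not_gt h)] at hp
    simp at hp
  have hpend : p.1 + 1 = (rowOf tab p.2).length := by
    by_contra h
    have h2 : p.1 + 1 < (rowOf tab p.2).length := by omega
    have := row_strict h2row hpk (Nat.lt_succ_self p.1) h2 hp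
      (List.getElem?_eq_getElem h2)
    exact absurd this not_top_lt
  have hptop : (rowOf tab (p.2 + 1)).length ≤ p.1 := by
    by_contra h
    have h2 : p.1 < (rowOf tab (p.2 + 1)).length := lt_of_not_ge h
    exact absurd (h4col p.2 p.1 ⊤ _ hp (List.getElem?_eq_getElem h2)) not_top_lt
  have hcell_p : p ∈ cellsOf tab := mem_cellsOf'.mpr ⟨hpk, hpi⟩
  -- facts about the insertion
  have hlen'' : ∀ y, (rowOf tab' y).length
      = (rowOf tab y).length + (if y = k then 1 else 0) := by
    intro y
    rcases lt_trichotomy y k with h | rfl | h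
    · rw [hrow y h, List.length_set, if_neg (show ¬y = k by omega)]
      omega
    · rw [happ]; simp
    · rw [hrest y h, if_neg (show ¬y = k by omega)]
      omega
  have hjun : ∀ j, k = j + 1 → (rowOf tab k).length ≤ pcol j := by
    intro j hkj
    by_contra hcon
    have h2 : pcol j < (rowOf tab (j + 1)).length := by rw [← hkj]; omega
    have hlt := h4col j (pcol j) (val (j + 1)) ((rowOf tab (j + 1))[pcol j]'h2)
      (hbump j (by omega)).1 (List.getElem?_eq_getElem h2)
    exact hterm ((rowOf tab (j + 1))[pcol j]'h2)
      (by rw [hkj]; exact List.getElem_mem h2) (by rw [hkj]; exact hlt)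
  set c : ℕ × ℕ := ((rowOf tab k).length, k) with hcdef
  have hcnot : c ∉ cellsOf tab := by
    intro h
    exact absurd (mem_cellsOf'.mp h).2 (lt_irrefl _)
  have hcells' : cellsOf tab' = insert c (cellsOf tab) := by
    ext q
    obtain ⟨qx, qy⟩ := q
    rw [Finset.mem_insert, mem_cellsOf, mem_cellsOf, hlen, hlen'' qy]
    have hy0 : ∀ z, tab.length ≤ z → (rowOf tab z).length = 0 := fun z h => by
      rw [rowOf_eq_nil_of_le h]; rfl
    have hcq : ((qx, qy) = c) ↔ (qx = (rowOf tab k).length ∧ qy = k) := by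
      rw [hcdef, Prod.ext_iff]
    rw [hcq]
    constructor
    · rintro ⟨hqy, hqx⟩
      rcases eq_or_ne qy k with rfl | hne
      · rw [if_pos rfl] at hqx
        rcases eq_or_ne qx (rowOf tab qy).length with rfl | hxe
        · exact Or.inl ⟨rfl, rfl⟩
        · refine Or.inr ⟨?_, by omega⟩
          rcases lt_or_ge qy tab.length with h | h
          · exact h
          · exact absurd (hy0 qy h) (by omega)
      · rw [if_neg hne] at hqx
        refine Or.inr ⟨?_, hqx⟩
        rcases lt_or_ge qy tab.length with h | h
        · exact h
        · exact absurd (hy0 qy h) (by omega)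
    · rintro (⟨rfl, rfl⟩ | ⟨h1, h2⟩)
      · exact ⟨by omega, by simp⟩
      · refine ⟨by omega, ?_⟩
        split_ifs <;> omega
  have hlow : IsLowerSet (insert c (↑(cellsOf tab) : Set (ℕ × ℕ))) := by
    rintro ⟨qx, qy⟩ ⟨rx, ry⟩ ⟨h1, h2⟩ hmem
    simp only [Set.mem_insert_iff, Finset.mem_coe] at hmem ⊢
    rcases hmem with heq | hmem
    · obtain ⟨e1, e2⟩ : qx = (rowOf tab k).length ∧ qy = k := by
        rw [hcdef, Prod.ext_iff] at heq; exact heq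
      rw [e1] at h1
      rw [e2] at h2
      rcases eq_or_ne (rx, ry) c with hceq | hne
      · exact Or.inl hceq
      · right
        rw [mem_cellsOf]
        have hne' : ¬(rx = (rowOf tab k).length ∧ ry = k) := fun hh =>
          hne (Prod.ext_iff.mpr ⟨hh.1, hh.2⟩)
        simp only at h1 h2
        rcases eq_or_ne ry k with heqr | hryk
        · have hrx : rx < (rowOf tab k).length := by
            rcases eq_or_ne rx (rowOf tab k).length with he | hne2
            · exact absurd ⟨he, heqr⟩ hne'
            · omega
          have hkL : k < tab.length := by
            rcases lt_or_ge k tab.length with h | h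
            · exact h
            · rw [rowOf_eq_nil_of_le h] at hrx; simp at hrx
          exact ⟨by omega, by rw [heqr]; exact hrx⟩
        · have hry : ry < k := by omega
          refine ⟨by omega, ?_⟩
          have hj1 : k = (k - 1) + 1 := by omega
          have h5 := hjun (k - 1) hj1
          have h6 : pcol (k - 1) < (rowOf tab (k - 1)).length := hpcol (k - 1) (by omega)
          have h7 := rowLen_anti h3len (show ry ≤ k - 1 by omega)
          omega
    · exact Or.inr (cells_lower h3len ⟨h1, h2⟩ hmem)
  -- entries of the new tableau
  have hent : ∀ qy qx, (rowOf tab' qy)[qx]? =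
      if qy = k ∧ qx = (rowOf tab k).length then some (val k)
      else if qy < k ∧ qx = pcol qy then some (val qy)
      else (rowOf tab qy)[qx]? := by
    intro qy qx
    rcases lt_trichotomy qy k with h | rfl | h
    · rw [hrow qy h, List.getElem?_set, if_neg (show ¬(qy = k ∧ _) by omega)]
      rcases eq_or_ne (pcol qy) qx with heq | hne
      · rw [if_pos heq, if_pos (hpcol qy h), if_pos ⟨h, heq.symm⟩]
      · rw [if_neg hne, if_neg (show ¬(qy < k ∧ qx = pcol qy) by omega)]
    · rw [happ]
      rcases lt_trichotomy qx (rowOf tab qy).length with h | rfl | h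
      · rw [List.getElem?_append_left h, if_neg (by omega), if_neg (by omega)]
      · rw [List.getElem?_append_right (le_refl _), if_pos ⟨rfl, rfl⟩]
        simp
      · rw [List.getElem?_append_right (by omega), if_neg (by omega), if_neg (by omega)]
        rw [List.getElem?_eq_none (by simp; omega), List.getElem?_eq_none (by omega)]
    · rw [hrest qy h, if_neg (by omega), if_neg (by omega)]
  -- values along the bumping route below the row of `p` are finite
  have hvalne : ∀ y, y ≤ k → y ≤ p.2 → val y ≠ ⊤ := by
    intro y
    induction y with
    | zero => intro _ _; rw [hval0]; exact WithTop.coe_ne_top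
    | succ y ihy =>
      intro h1 h2
      intro hcon
      have h3 := (hbump y (by omega)).1
      rw [hcon] at h3
      have h4 := hpuniq (pcol y, y) h3
      have h5 : y = p.2 := congrArg Prod.snd h4
      omega
  have hkne : k ≠ p.2 := by
    intro hke
    have h1 : val k ≠ ⊤ := hvalne k (le_refl _) (le_of_eq hke)
    have h2 : (⊤ : WithTop ℝ) ∈ rowOf tab k := by
      rw [hke]; exact List.mem_iff_getElem?.mpr ⟨p.1, hp⟩
    exact hterm ⊤ h2 (lt_top_iff_ne_top.mpr h1)
  have hpcolle : p.2 < k → pcol p.2 ≤ p.1 := by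
    intro h
    by_contra hcon
    exact hmin p.2 h p.1 (by omega) ⊤ hp
      (lt_top_iff_ne_top.mpr (hvalne p.2 (by omega) (le_refl _)))
  -- the augmented shape of `tab`
  rw [shStar_eq hp hpuniq]
  have hlowa : IsLowerSet (↑((cellsOf tab).erase p) : Set (ℕ × ℕ)) := by
    rintro ⟨qx, qy⟩ ⟨rx, ry⟩ ⟨h1, h2⟩ hmem
    simp only [Finset.coe_erase, Set.mem_diff, Finset.mem_coe,
      Set.mem_singleton_iff] at hmem ⊢
    obtain ⟨hmem, hne⟩ := hmem
    simp only at h1 h2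
    refine ⟨cells_lower h3len ⟨h1, h2⟩ hmem, ?_⟩
    intro hrp
    obtain ⟨er1, er2⟩ := Prod.ext_iff.mp hrp
    obtain ⟨hq1, hq2⟩ := mem_cellsOf.mp hmem
    have hqne : ¬(qx = p.1 ∧ qy = p.2) := fun hh => hne (Prod.ext_iff.mpr ⟨hh.1, hh.2⟩)
    rcases Nat.lt_or_ge p.2 qy with hgt | hle
    · have h7 := rowLen_anti h3len (show p.2 + 1 ≤ qy from hgt)
      omega
    · have hqy : qy = p.2 := by omega
      rw [hqy] at hq2
      omega
  have hauga : IsAug ((cellsOf tab).erase p) p := by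
    refine ⟨hlowa, Finset.notMem_erase _ _, ?_⟩
    rw [Finset.coe_erase, Set.insert_diff_singleton,
      Set.insert_eq_self.mpr (Finset.mem_coe.mpr hcell_p)]
    exact cells_lower h3len
  have hcard_pos : 0 < (cellsOf tab).card := Finset.card_pos.mpr ⟨p, hcell_p⟩
  have hcard_erase := Finset.card_erase_of_mem hcell_p
  by_cases hcase : p.2 < k ∧ pcol p.2 = p.1
  · -- CASE (ii): `⊤` is bumped
    obtain ⟨hpk2, hpc⟩ := hcase
    have hvtop : val (p.2 + 1) = ⊤ := by
      have h3 := (hbump p.2 hpk2).1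
      rw [hpc] at h3
      exact (Option.some_inj.mp (hp.symm.trans h3)).symm
    have hkk : k = p.2 + 1 := by
      by_contra hne
      have h1 : p.2 + 1 < k := by omega
      have h2 := (hbump (p.2 + 1) h1).2
      rw [hvtop] at h2
      exact absurd h2 not_top_lt
    have hctop : (rowOf tab' c.2)[c.1]? = some ⊤ := by
      rw [hcdef]
      rw [hent k (rowOf tab k).length, if_pos ⟨rfl, rfl⟩, hkk, hvtop]
    have huniq' : ∀ q : ℕ × ℕ, (rowOf tab' q.2)[q.1]? = some ⊤ → q = c := by
      intro q hq
      rw [hent q.2 q.1] at hq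
      split_ifs at hq with hif1 hif2
      · rw [hcdef, Prod.ext_iff]; exact ⟨hif1.2, hif1.1⟩
      · exact absurd (Option.some_inj.mp hq) (hvalne q.2 (by omega) (by omega))
      · exfalso
        have hqp := hpuniq q hq
        apply hif2
        rw [hqp]
        exact ⟨hpk2, hpc.symm⟩
    rw [shStar_eq hctop huniq', hcells', Finset.erase_insert hcnot]
    refine ⟨hauga, ⟨cells_lower h3len, hcnot, hlow⟩,
      Finset.erase_subset _ _, ?_, ?_⟩
    · show (cellsOf tab).card = ((cellsOf tab).erase p).card + 1
      omega
    rw [if_pos (Finset.insert_erase hcell_p).symm]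
    rw [hcdef, hkk]
  · -- CASE (i): `⊤` stays in place
    have hvalne' : ∀ y, y ≤ k → val y ≠ ⊤ := by
      intro y
      induction y with
      | zero => intro _; rw [hval0]; exact WithTop.coe_ne_top
      | succ y ihy =>
        intro h1 hcon
        have h3 := (hbump y (by omega)).1
        rw [hcon] at h3
        have h4 := hpuniq (pcol y, y) h3
        have h5 : y = p.2 := congrArg Prod.snd h4
        have h6 : pcol y = p.1 := congrArg Prod.fst h4
        exact hcase ⟨by omega, by rw [← h5]; exact h6⟩
    have hptop' : (rowOf tab' p.2)[p.1]? = some ⊤ := by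
      rw [hent p.2 p.1, if_neg, if_neg]
      · exact hp
      · rintro ⟨ha1, ha2⟩
        exact hcase ⟨ha1, ha2.symm⟩
      · rintro ⟨ha1, _⟩
        exact hkne ha1.symm
    have huniq' : ∀ q : ℕ × ℕ, (rowOf tab' q.2)[q.1]? = some ⊤ → q = p := by
      intro q hq
      rw [hent q.2 q.1] at hq
      split_ifs at hq with hif1 hif2
      · exact absurd (Option.some_inj.mp hq) (hvalne' k (le_refl _))
      · exact absurd (Option.some_inj.mp hq) (hvalne' q.2 (by omega))
      · exact hpuniq q hq
    rw [shStar_eq hptop' huniq', hcells']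
    have hpmemins : p ∈ insert c (cellsOf tab) := Finset.mem_insert_of_mem hcell_p
    have hlowb : IsLowerSet (↑((insert c (cellsOf tab)).erase p) : Set (ℕ × ℕ)) := by
      rintro ⟨qx, qy⟩ ⟨rx, ry⟩ ⟨h1, h2⟩ hmem
      simp only [Finset.coe_erase, Set.mem_diff, Finset.mem_coe, Set.mem_singleton_iff,
        Finset.mem_insert] at hmem ⊢
      obtain ⟨hmem, hne⟩ := hmem
      simp only at h1 h2
      have hmem2 : ((rx, ry) : ℕ × ℕ) ∈ insert c (↑(cellsOf tab) : Set (ℕ × ℕ)) :=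
        hlow (show ((rx, ry) : ℕ × ℕ) ≤ (qx, qy) from ⟨h1, h2⟩)
          (Set.mem_insert_iff.mpr (hmem.imp id Finset.mem_coe.mpr))
      refine ⟨by simpa [Set.mem_insert_iff, Finset.mem_coe] using hmem2, ?_⟩
      intro hrp
      obtain ⟨er1, er2⟩ := Prod.ext_iff.mp hrp
      rcases hmem with heq | hmemc
      · obtain ⟨e1, e2⟩ : qx = (rowOf tab k).length ∧ qy = k := by
          rw [hcdef, Prod.ext_iff] at heq; exact heq
        have hpk2 : p.2 < k := by omega
        have hple := hpcolle hpk2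
        have hpne : pcol p.2 ≠ p.1 := fun hh => hcase ⟨hpk2, hh⟩
        have hj1 : k = (k - 1) + 1 := by omega
        have h5 := hjun (k - 1) hj1
        have h6 : pcol (k - 1) < (rowOf tab (k - 1)).length := hpcol (k - 1) (by omega)
        rcases eq_or_ne k (p.2 + 1) with hke | hke
        · have hk1 : k - 1 = p.2 := by omega
          rw [hk1] at h5
          omega
        · have h7 := rowLen_anti h3len (show p.2 + 1 ≤ k - 1 by omega)
          omega
      · obtain ⟨hq1, hq2⟩ := mem_cellsOf.mp hmemc
        have hqne : ¬(qx = p.1 ∧ qy = p.2) := fun hh => hne (Prod.ext_iff.mpr ⟨hh.1, hh.2⟩)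
        rcases Nat.lt_or_ge p.2 qy with hgt | hle
        · have h7 := rowLen_anti h3len (show p.2 + 1 ≤ qy from hgt)
          omega
        · have hqy : qy = p.2 := by omega
          rw [hqy] at hq2
          omega
    refine ⟨hauga, ⟨hlowb, Finset.notMem_erase _ _, ?_⟩,
      Finset.erase_subset_erase _ (Finset.subset_insert _ _), ?_, ?_⟩
    · show IsLowerSet (insert p (((insert c (cellsOf tab)).erase p : Finset (ℕ × ℕ)) :
        Set (ℕ × ℕ)))
      rw [Finset.coe_erase, Set.insert_diff_singleton,
        Set.insert_eq_self.mpr (Finset.mem_coe.mpr hpmemins), Finset.coe_insert]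
      exact hlow
    · show ((insert c (cellsOf tab)).erase p).card = ((cellsOf tab).erase p).card + 1
      rw [Finset.card_erase_of_mem hpmemins, Finset.card_insert_of_notMem hcnot]
      omega
    · rw [if_neg, ]
      intro heq
      have h1 : p ∈ insert p ((cellsOf tab).erase p) := Finset.mem_insert_self _ _
      rw [← heq] at h1
      exact Finset.notMem_erase _ _ h1

end PoissonBump
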